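/- More generally, let f, g ∈ C[x₁,…,xₙ] be nonzero with g/f not a polynomial (f does not divide g). If b(s) is any polynomial satisfying b(s)·g f^s ∈ Aₙ[s]·(gf)f^s in the module C[x,1/f,s]f^s, then b(-1) = 0. -/
import Mathlib


open Polynomial

section

variable (n : ℕ) (f : MvPolynomial (Fin n) ℂ)
variable (Rf : Type) [CommRing Rf] [Algebra ℂ Rf]
  [Algebra (MvPolynomial (Fin n) ℂ) Rf] [IsScalarTower ℂ (MvPolynomial (Fin n) ℂ) Rf]
  [IsLocalization.Away f Rf]

/-- The action of a derivation `D` on the module `ℂ[x,1/f,s]·f^s`, modelled as `Rf[s]`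
(`Rf = ℂ[x][1/f]`) with generator `f^s = 1`: `D` acts on `P(s)·f^s` by
`(D P)(s)·f^s + s·P(s)·(D f / f)·f^s`. -/
noncomputable def derAct (D : Derivation ℂ Rf Rf) (P : Polynomial Rf) : Polynomial Rf :=
  P.sum (fun i r => Polynomial.C (D r) * Polynomial.X ^ i) +
    Polynomial.X * P *
      Polynomial.C (D (algebraMap (MvPolynomial (Fin n) ℂ) Rf f) *
        IsLocalization.Away.invSelf (S := Rf) f)

/-- `b` satisfies the functional equation `b(s)·u ∈ Aₙ[s]·v` in `ℂ[x,1/f,s]·f^s ≅ Rf[s]`: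
`b(s)·u` lies in every `ℂ`-submodule containing `v` which is stable under
multiplication by the `x_i`, multiplication by `s`, and the partial derivatives
(i.e. the derivations of `Rf` preserving the image of `ℂ[x]`). -/
def FunEq (u v : Polynomial Rf) (b : Polynomial ℂ) : Prop :=
  ∀ N : Submodule ℂ (Polynomial Rf), v ∈ N →
    (∀ i : Fin n, ∀ w ∈ N,
      Polynomial.C (algebraMap (MvPolynomial (Fin n) ℂ) Rf (MvPolynomial.X i)) * w ∈ N) →
    (∀ w ∈ N, Polynomial.X * w ∈ N) →
    (∀ D : Derivation ℂ Rf Rf,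
      (∀ r : MvPolynomial (Fin n) ℂ, ∃ r' : MvPolynomial (Fin n) ℂ,
        D (algebraMap (MvPolynomial (Fin n) ℂ) Rf r) =
          algebraMap (MvPolynomial (Fin n) ℂ) Rf r') →
      ∀ w ∈ N, derAct n f Rf D w ∈ N) →
    b.map (algebraMap ℂ Rf) * u ∈ N

/-- If `f, g ∈ ℂ[x₁,…,xₙ]` are nonzero with `f ∤ g`, and `b` is any polynomial
satisfying `b(s)·g·f^s ∈ Aₙ[s]·(gf)·f^s` in `ℂ[x,1/f,s]·f^s ≅ Rf[s]`, then
`b(-1) = 0`. Here `g·f^s` is `C ḡ` and `(gf)·f^s` is `C (g·f)‾`. -/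
theorem bfunction_g_eval_neg_one (g : MvPolynomial (Fin n) ℂ)
    (hf0 : f ≠ 0) (hg0 : g ≠ 0) (hdvd : ¬ f ∣ g)
    (b : Polynomial ℂ)
    (hb : FunEq n f Rf
      (Polynomial.C (algebraMap (MvPolynomial (Fin n) ℂ) Rf g))
      (Polynomial.C (algebraMap (MvPolynomial (Fin n) ℂ) Rf (g * f))) b) :
    b.eval (-1) = 0 := by
  -- Notation
  set A := algebraMap (MvPolynomial (Fin n) ℂ) Rf with hA
  set finv := IsLocalization.Away.invSelf (S := Rf) f with hfinv
  have hfu : A f * finv = 1 := IsLocalization.Away.mul_invSelf f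
  -- the specialization map ψ : Rf[s] → Rf, w ↦ w(-1) * f⁻¹
  let ψ : Polynomial Rf →ₗ[ℂ] Rf :=
    { toFun := fun w => Polynomial.eval (-1 : Rf) w * finv
      map_add' := by intro w₁ w₂; simp [add_mul]
      map_smul' := by
        intro c w
        simp [Algebra.smul_def, mul_assoc, Polynomial.eval_smul] }
  -- the image of ℂ[x] in Rf, as a ℂ-submodule
  let M : Submodule ℂ Rf :=
    LinearMap.range ((IsScalarTower.toAlgHom ℂ (MvPolynomial (Fin n) ℂ) Rf).toLinearMap)
  have hMmem : ∀ x : Rf, x ∈ M ↔ ∃ r : MvPolynomial (Fin n) ℂ, A r = x := by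
    intro x
    constructor
    · rintro ⟨r, rfl⟩; exact ⟨r, rfl⟩
    · rintro ⟨r, rfl⟩; exact ⟨r, rfl⟩
  let N : Submodule ℂ (Polynomial Rf) := M.comap ψ
  have hψ : ∀ w : Polynomial Rf, ψ w = Polynomial.eval (-1 : Rf) w * finv := fun _ => rfl
  -- apply the functional equation to N
  have h1 : Polynomial.C (A (g * f)) ∈ N := by
    show ψ _ ∈ M
    rw [hψ, Polynomial.eval_C, map_mul]
    rw [hMmem]
    exact ⟨g, by rw [mul_assoc, hfu, mul_one]⟩
  have h2 : ∀ i : Fin n, ∀ w ∈ N, Polynomial.C (A (MvPolynomial.X i)) * w ∈ N := by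
    intro i w hw
    show ψ _ ∈ M
    rw [hψ, Polynomial.eval_mul, Polynomial.eval_C, mul_assoc]
    obtain ⟨r, hr⟩ := (hMmem _).1 hw
    rw [hψ] at hr
    rw [← hr, hMmem]
    exact ⟨MvPolynomial.X i * r, by rw [map_mul]⟩
  have h3 : ∀ w ∈ N, Polynomial.X * w ∈ N := by
    intro w hw
    show ψ _ ∈ M
    rw [hψ, Polynomial.eval_mul, Polynomial.eval_X, neg_one_mul, neg_mul]
    obtain ⟨r, hr⟩ := (hMmem _).1 hw
    rw [hψ] at hr
    rw [← hr, hMmem]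
    exact ⟨-r, by rw [map_neg]⟩
  have h4 : ∀ D : Derivation ℂ Rf Rf,
      (∀ r : MvPolynomial (Fin n) ℂ, ∃ r' : MvPolynomial (Fin n) ℂ,
        D (A r) = A r') →
      ∀ w ∈ N, derAct n f Rf D w ∈ N := by
    intro D hD w hw
    show ψ _ ∈ M
    have hDneg1pow : ∀ i : ℕ, D ((-1 : Rf) ^ i) = 0 := by
      intro i
      have : ((-1 : Rf) ^ i) = algebraMap ℂ Rf ((-1 : ℂ) ^ i) := by
        rw [map_pow, map_neg, map_one]
      rw [this, Derivation.map_algebraMap]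
    have key : ∀ P : Polynomial Rf, Polynomial.eval (-1 : Rf)
        (P.sum fun i r => Polynomial.C (D r) * Polynomial.X ^ i)
        = D (Polynomial.eval (-1 : Rf) P) := by
      intro P
      induction P using Polynomial.induction_on' with
      | add p q hp hq =>
        rw [Polynomial.sum_add_index p q _ (fun i => by simp)
          (fun a b₁ b₂ => by rw [map_add, Polynomial.C_add, add_mul]),
          Polynomial.eval_add, hp, hq, Polynomial.eval_add, map_add]
      | monomial i r =>
        rw [Polynomial.sum_monomial_index r _ (by simp)]
        rw [Polynomial.eval_mul, Polynomial.eval_C, Polynomial.eval_pow, Polynomial.eval_X]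
        rw [Polynomial.eval_monomial, Derivation.leibniz, hDneg1pow, smul_zero, zero_add,
          smul_eq_mul, mul_comm]
    have hDinv : D finv = -(finv * finv * D (A f)) := by
      have h0 : D (A f * finv) = 0 := by rw [hfu]; exact Derivation.map_one_eq_zero D
      rw [Derivation.leibniz, smul_eq_mul, smul_eq_mul] at h0
      have := congrArg (fun x => finv * x) h0
      simp only [mul_add, mul_zero] at this
      have h1' : finv * (A f * D finv) = D finv := by
        rw [← mul_assoc, mul_comm finv (A f), hfu, one_mul]
      rw [h1'] at this
      linear_combination this
    -- compute ψ (derAct w)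
    have hcomp : ψ (derAct n f Rf D w) = D (ψ w) := by
      rw [hψ, hψ]
      unfold derAct
      rw [Polynomial.eval_add, key w, Polynomial.eval_mul, Polynomial.eval_mul,
        Polynomial.eval_X, Polynomial.eval_C]
      rw [Derivation.leibniz, hDinv, smul_eq_mul, smul_eq_mul]
      ring
    rw [hcomp, hψ]
    obtain ⟨r, hr⟩ := (hMmem _).1 hw
    rw [hψ] at hr
    rw [← hr]
    obtain ⟨r', hr'⟩ := hD r
    rw [hr', hMmem]
    exact ⟨r', rfl⟩
  have hmem := hb N h1 h2 h3 h4
  -- hmem : ψ (b.map (algebraMap ℂ Rf) * C (A g)) ∈ M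
  have heval : Polynomial.eval (-1 : Rf) (b.map (algebraMap ℂ Rf)) =
      algebraMap ℂ Rf (b.eval (-1)) := by
    have hneg : (-1 : Rf) = algebraMap ℂ Rf (-1) := by rw [map_neg, map_one]
    rw [Polynomial.eval_map, hneg, Polynomial.eval₂_at_apply]
  have hmem' : algebraMap ℂ Rf (b.eval (-1)) * A g * finv ∈ M := by
    have : ψ (b.map (algebraMap ℂ Rf) * Polynomial.C (A g)) ∈ M := hmem
    rw [hψ, Polynomial.eval_mul, Polynomial.eval_C, heval] at this
    exact this
  obtain ⟨r, hr⟩ := (hMmem _).1 hmem'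
  -- multiply by A f
  have hAC : ∀ c : ℂ, A (MvPolynomial.C c) = algebraMap ℂ Rf c := by
    intro c
    rw [← MvPolynomial.algebraMap_eq, ← IsScalarTower.algebraMap_apply]
  have hfeq : A (MvPolynomial.C (b.eval (-1)) * g) = A (f * r) := by
    have h5 := congrArg (fun x => x * A f) hr
    rw [mul_assoc, mul_comm finv (A f), hfu, mul_one] at h5
    rw [map_mul, map_mul, hAC, ← h5]
    ring
  have hinj : Function.Injective A :=
    IsLocalization.injective (M := Submonoid.powers f) Rf
      (powers_le_nonZeroDivisors_of_noZeroDivisors hf0)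
  have heqp : MvPolynomial.C (b.eval (-1)) * g = f * r := hinj hfeq
  by_contra hne
  apply hdvd
  refine ⟨MvPolynomial.C ((b.eval (-1))⁻¹) * r, ?_⟩
  have hcancel : MvPolynomial.C ((b.eval (-1))⁻¹) *
      (MvPolynomial.C (b.eval (-1)) * g) = g := by
    rw [← mul_assoc, ← MvPolynomial.C_mul, inv_mul_cancel₀ hne, MvPolynomial.C_1, one_mul]
  rw [heqp] at hcancel
  rw [← hcancel]
  ring

end
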